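/- For every integer ν ≥ 3, the real vector space of weighted homogeneous polynomials of weight ν in the variables (a,b,x) is the direct sum of the image of the Chern–Moser operator T_ν and the subspace N_ν spanned by the weight-ν monomials that are not non-normal. -/

import Mathlib

/- Weights: a ↦ 2, b ↦ 1, x ↦ 1 (variables of `MvPolynomial (Fin 3) ℝ`, indices 0,1,2);
   for polynomials in (x,y) (`Fin 2`, indices 0,1): x ↦ 1, y ↦ 2;
   for polynomials in (a,b): a ↦ 2, b ↦ 1. -/

open MvPolynomial

/-- weights on the variables (a, b, x) -/
noncomputable def wABX : Fin 3 → ℕ := ![2, 1, 1]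
/-- weights on the variables (x, y) -/
noncomputable def wXY : Fin 2 → ℕ := ![1, 2]
/-- weights on the variables (a, b) -/
noncomputable def wAB : Fin 2 → ℕ := ![2, 1]

/-- The Chern–Moser operator:
`T(η,α,β,ξ)(a,b,x) = η(x, a+bx) − α(a,b) − x·β(a,b) − b·ξ(x, a+bx)`. -/
noncomputable def cmT (η α β ξ : MvPolynomial (Fin 2) ℝ) : MvPolynomial (Fin 3) ℝ :=
  aeval ![(X 2 : MvPolynomial (Fin 3) ℝ), X 0 + X 1 * X 2] η
  - aeval ![(X 0 : MvPolynomial (Fin 3) ℝ), X 1] α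
  - X 2 * aeval ![(X 0 : MvPolynomial (Fin 3) ℝ), X 1] β
  - X 1 * aeval ![(X 2 : MvPolynomial (Fin 3) ℝ), X 0 + X 1 * X 2] ξ

/-- A monomial `a^(d 0) b^(d 1) x^(d 2)` is non-normal if it is of one of the types
`a^i x^j`, `a^i b^j`, `a^i b x^j`, `a^i b^j x`, `a^i b^2 x^2`, `a^i b^2 x^3`,
`a^i b^3 x^2`, `a^i b^3 x^3`. -/
def NonNormal (d : Fin 3 →₀ ℕ) : Prop :=
  d 1 = 0 ∨ d 2 = 0 ∨ d 1 = 1 ∨ d 2 = 1 ∨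
    ((d 1 = 2 ∨ d 1 = 3) ∧ (d 2 = 2 ∨ d 2 = 3))

/-!
Write `u = a + b x`. The `α`- and `β`-parts of `T` are exactly the polynomials of `x`-degree at
most one, while `x^p y^l ↦ x^p u^l = ∑ₛ C(l,s) a^(l-s) b^s x^(p+s)` spreads each monomial of `η`
(and, times `b`, of `ξ`) along a line `k - j = const` of monomials `a^i b^j x^k`. Hence at
`x`-degree `k ≥ 2` the coefficient of `T` is `C(i+j,j) η_(k-j,i+j) - C(i+j-1,j-1) ξ_(k-j+1,i+j-1)`.

Uniqueness: if `T` vanishes at the non-normal monomials, the monomials `b^0` and `b^1` kill the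
coefficients of `η`, `ξ` of large `x`-degree, and the pairs `(b²x², b³x³)`, `(b x², b² x³)` give
2×2 systems with determinant `C(n+1,k+1) C(n,k+1) - C(n+1,k+2) C(n,k) ≠ 0`; what survives
feeds no normal monomial. Existence: by downward induction on the `b`-degree, every monomial lies
in `Im T_ν + N_ν`, since each non-normal one is, up to monomials of `x`-degree at most one, the
term of least `b`-degree of a suitable `T(η,0,0,ξ)`; for `b²x³` and `b³x³` the same determinant
makes its coefficient nonzero.
-/

/-- `mon2 p q` is the exponent of `x^p y^q` (or `a^p b^q`), `mon3 i j k` that of `a^i b^j x^k`. -/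
noncomputable def mon2 (p q : ℕ) : Fin 2 →₀ ℕ := Finsupp.single 0 p + Finsupp.single 1 q

noncomputable def mon3 (i j k : ℕ) : Fin 3 →₀ ℕ :=
  Finsupp.single 0 i + Finsupp.single 1 j + Finsupp.single 2 k

@[simp] lemma mon2_apply_zero (p q : ℕ) : mon2 p q 0 = p := by simp [mon2]
@[simp] lemma mon2_apply_one (p q : ℕ) : mon2 p q 1 = q := by simp [mon2]
@[simp] lemma mon3_apply_zero (i j k : ℕ) : mon3 i j k 0 = i := by simp [mon3]
@[simp] lemma mon3_apply_one (i j k : ℕ) : mon3 i j k 1 = j := by simp [mon3]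
@[simp] lemma mon3_apply_two (i j k : ℕ) : mon3 i j k 2 = k := by simp [mon3]

lemma eq_mon2 (u : Fin 2 →₀ ℕ) : u = mon2 (u 0) (u 1) := by
  ext r; fin_cases r <;> simp

lemma eq_mon3 (d : Fin 3 →₀ ℕ) : d = mon3 (d 0) (d 1) (d 2) := by
  ext r; fin_cases r <;> simp

@[simp] lemma mon2_inj {p q p' q' : ℕ} : mon2 p q = mon2 p' q' ↔ p = p' ∧ q = q' := by
  refine ⟨fun h => ⟨by simpa using congr($h 0), by simpa using congr($h 1)⟩, ?_⟩
  rintro ⟨rfl, rfl⟩; rfl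

@[simp] lemma mon3_inj {i j k i' j' k' : ℕ} :
    mon3 i j k = mon3 i' j' k' ↔ i = i' ∧ j = j' ∧ k = k' := by
  refine ⟨fun h => ⟨by simpa using congr($h 0), by simpa using congr($h 1),
    by simpa using congr($h 2)⟩, ?_⟩
  rintro ⟨rfl, rfl, rfl⟩; rfl

lemma weight_mon2_wXY (p q : ℕ) : Finsupp.weight wXY (mon2 p q) = p + 2 * q := by
  simp [mon2, wXY, Finsupp.weight_apply, Finsupp.sum_add_index', add_mul]; ring

lemma weight_mon2_wAB (p q : ℕ) : Finsupp.weight wAB (mon2 p q) = 2 * p + q := by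
  simp [mon2, wAB, Finsupp.weight_apply, Finsupp.sum_add_index', add_mul]; ring

lemma weight_mon3 (i j k : ℕ) : Finsupp.weight wABX (mon3 i j k) = 2 * i + j + k := by
  simp [mon3, wABX, Finsupp.weight_apply, Finsupp.sum_add_index', add_mul]; ring

lemma monomial_mon3 (i j k : ℕ) (c : ℝ) :
    monomial (mon3 i j k) c = C c * X 0 ^ i * X 1 ^ j * X 2 ^ k := by
  simp only [mon3, X_pow_eq_monomial, C_mul_monomial, monomial_mul]
  simp

lemma monomial_mon2 (p q : ℕ) (c : ℝ) :
    monomial (mon2 p q) c = C c * X 0 ^ p * X 1 ^ q := by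
  simp only [mon2, X_pow_eq_monomial, C_mul_monomial, monomial_mul]
  simp

lemma aeval_ab_monomial (i j : ℕ) (c : ℝ) :
    aeval ![(X 0 : MvPolynomial (Fin 3) ℝ), X 1] (monomial (mon2 i j) c)
      = monomial (mon3 i j 0) c := by
  simp [monomial_mon2, monomial_mon3, algebraMap_eq]

lemma coeff_aeval_ab (α : MvPolynomial (Fin 2) ℝ) (i j k : ℕ) :
    coeff (mon3 i j k) (aeval ![(X 0 : MvPolynomial (Fin 3) ℝ), X 1] α)
      = if k = 0 then coeff (mon2 i j) α else 0 := by
  induction α using MvPolynomial.induction_on' with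
  | monomial u c =>
    rw [eq_mon2 u, aeval_ab_monomial, coeff_monomial, coeff_monomial]
    split_ifs <;> simp_all
  | add p q hp hq => simp only [map_add, coeff_add, hp, hq]; split_ifs <;> simp

lemma aeval_xu_monomial (p l : ℕ) (c : ℝ) :
    aeval ![(X 2 : MvPolynomial (Fin 3) ℝ), X 0 + X 1 * X 2] (monomial (mon2 p l) c)
      = ∑ s ∈ Finset.range (l + 1), monomial (mon3 (l - s) s (p + s)) (c * l.choose s) := by
  simp only [monomial_mon2, map_mul, map_pow, aeval_C, aeval_X, algebraMap_eq,
    Matrix.cons_val_zero, Matrix.cons_val_one]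
  rw [add_comm, add_pow, Finset.mul_sum]
  refine Finset.sum_congr rfl fun s _ => ?_
  rw [monomial_mon3, C_mul, map_natCast]
  ring

lemma coeff_aeval_xu_monomial (p l : ℕ) (c : ℝ) (i j k : ℕ) :
    coeff (mon3 i j k)
        (aeval ![(X 2 : MvPolynomial (Fin 3) ℝ), X 0 + X 1 * X 2] (monomial (mon2 p l) c))
      = if k = p + j ∧ i + j = l then c * l.choose j else 0 := by
  rw [aeval_xu_monomial, coeff_sum]
  simp only [coeff_monomial, mon3_inj]
  split_ifs with h
  · rw [Finset.sum_eq_single j (fun s _ hs => if_neg (by omega)) (by simp; omega),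
      if_pos (by omega)]
  · exact Finset.sum_eq_zero fun s hs => if_neg (by simp at hs; omega)

lemma coeff_aeval_xu (η : MvPolynomial (Fin 2) ℝ) (i j k : ℕ) :
    coeff (mon3 i j k) (aeval ![(X 2 : MvPolynomial (Fin 3) ℝ), X 0 + X 1 * X 2] η)
      = if j ≤ k then (i + j).choose j * coeff (mon2 (k - j) (i + j)) η else 0 := by
  induction η using MvPolynomial.induction_on' with
  | monomial u c =>
    rw [eq_mon2 u, coeff_aeval_xu_monomial, coeff_monomial]
    split_ifs <;> simp_all [mul_comm]
  | add p q hp hq => simp only [map_add, coeff_add, hp, hq]; split_ifs <;> ring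

lemma coeff_X_one_mul (F : MvPolynomial (Fin 3) ℝ) (i j k : ℕ) :
    coeff (mon3 i j k) (X 1 * F) = if j = 0 then 0 else coeff (mon3 i (j - 1) k) F := by
  rw [coeff_X_mul']
  split_ifs with h h' h' <;> simp_all
  congr 1; ext r; fin_cases r <;> simp

lemma coeff_X_two_mul (F : MvPolynomial (Fin 3) ℝ) (i j k : ℕ) :
    coeff (mon3 i j k) (X 2 * F) = if k = 0 then 0 else coeff (mon3 i j (k - 1)) F := by
  rw [coeff_X_mul']
  split_ifs with h h' h' <;> simp_all
  congr 1; ext r; fin_cases r <;> simp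

lemma coeff_cmT (η α β ξ : MvPolynomial (Fin 2) ℝ) (i j k : ℕ) :
    coeff (mon3 i j k) (cmT η α β ξ)
      = coeff (mon3 i j k) (aeval ![(X 2 : MvPolynomial (Fin 3) ℝ), X 0 + X 1 * X 2] η)
        - (if k = 0 then coeff (mon2 i j) α else 0)
        - (if k = 1 then coeff (mon2 i j) β else 0)
        - (if j = 0 then 0 else coeff (mon3 i (j - 1) k)
            (aeval ![(X 2 : MvPolynomial (Fin 3) ℝ), X 0 + X 1 * X 2] ξ)) := by
  rw [cmT, coeff_sub, coeff_sub, coeff_sub, coeff_X_two_mul, coeff_X_one_mul, coeff_aeval_ab,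
    coeff_aeval_ab]
  congr 2
  split_ifs <;> first | rfl | omega

lemma eq_zero_of_choose_pair {n k : ℕ} (hk : k + 1 ≤ n) {A B : ℝ}
    (h₁ : ((n + 1).choose (k + 1) : ℝ) * A = n.choose k * B)
    (h₂ : ((n + 1).choose (k + 2) : ℝ) * A = n.choose (k + 1) * B) : A = 0 ∧ B = 0 := by
  have e₁ : ((n + 1 : ℕ) : ℝ) * n.choose k = (n + 1).choose (k + 1) * (k + 1 : ℕ) := by
    exact_mod_cast Nat.add_one_mul_choose_eq n k
  have e₂ : ((n + 1 : ℕ) : ℝ) * n.choose (k + 1) = (n + 1).choose (k + 2) * (k + 2 : ℕ) := by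
    exact_mod_cast Nat.add_one_mul_choose_eq n (k + 1)
  have c₁ : (n.choose k : ℝ) ≠ 0 := by exact_mod_cast (Nat.choose_pos (by omega)).ne'
  have c₂ : (n.choose (k + 1) : ℝ) ≠ 0 := by exact_mod_cast (Nat.choose_pos hk).ne'
  push_cast at e₁ e₂
  have r₁ : ((n : ℝ) + 1) * A = (k + 1) * B :=
    mul_left_cancel₀ c₁ (by linear_combination (k + 1 : ℝ) * h₁ + A * e₁)
  have r₂ : ((n : ℝ) + 1) * A = (k + 2) * B :=
    mul_left_cancel₀ c₂ (by linear_combination (k + 2 : ℝ) * h₂ + A * e₂)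
  have hB : B = 0 := by linear_combination r₁ - r₂
  refine ⟨?_, hB⟩
  have : ((n : ℝ) + 1) ≠ 0 := by positivity
  exact (mul_eq_zero.mp (by rw [r₁, hB, mul_zero])).resolve_left this

def HasNormalSupport (Q : MvPolynomial (Fin 3) ℝ) : Prop := ∀ d ∈ Q.support, ¬NonNormal d

lemma HasNormalSupport.coeff_eq_zero {Q : MvPolynomial (Fin 3) ℝ} (hQ : HasNormalSupport Q)
    {d : Fin 3 →₀ ℕ} (hd : NonNormal d) : coeff d Q = 0 :=
  notMem_support_iff.mp fun h => hQ d h hd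

section Uniqueness

variable {η α β ξ : MvPolynomial (Fin 2) ℝ}

lemma coeff_eta_eq_zero_of_two_le (hT : HasNormalSupport (cmT η α β ξ)) {p : ℕ} (hp : 2 ≤ p)
    (l : ℕ) : coeff (mon2 p l) η = 0 := by
  have h := hT.coeff_eq_zero (d := mon3 l 0 p) (by simp [NonNormal])
  rw [coeff_cmT, coeff_aeval_xu] at h
  simpa [show p ≠ 0 by omega, show p ≠ 1 by omega] using h

lemma coeff_xi_eq_zero_of_three_le (hT : HasNormalSupport (cmT η α β ξ)) {p : ℕ} (hp : 3 ≤ p)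
    (l : ℕ) : coeff (mon2 p l) ξ = 0 := by
  have h := hT.coeff_eq_zero (d := mon3 l 1 p) (by simp [NonNormal])
  rw [coeff_cmT, coeff_aeval_xu, coeff_aeval_xu] at h
  simp [show p ≠ 0 by omega, show p ≠ 1 by omega, show 1 ≤ p by omega] at h
  rwa [coeff_eta_eq_zero_of_two_le hT (by omega), mul_zero, zero_sub, neg_eq_zero] at h

lemma coeff_xi_zero_eq_zero (hT : HasNormalSupport (cmT η α β ξ)) (l : ℕ) :
    coeff (mon2 0 (l + 2)) ξ = 0 := by
  have h := hT.coeff_eq_zero (d := mon3 l 3 2) (by simp [NonNormal])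
  rw [coeff_cmT, coeff_aeval_xu, coeff_aeval_xu] at h
  simpa [Nat.choose_eq_zero_iff] using h

lemma coeff_eta_zero_and_xi_one_eq_zero (hT : HasNormalSupport (cmT η α β ξ)) (l : ℕ) :
    coeff (mon2 0 (l + 3)) η = 0 ∧ coeff (mon2 1 (l + 2)) ξ = 0 := by
  have h₁ := hT.coeff_eq_zero (d := mon3 (l + 1) 2 2) (by simp [NonNormal])
  have h₂ := hT.coeff_eq_zero (d := mon3 l 3 3) (by simp [NonNormal])
  rw [coeff_cmT, coeff_aeval_xu, coeff_aeval_xu] at h₁ h₂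
  refine eq_zero_of_choose_pair (n := l + 2) (k := 1) (by omega) ?_ ?_
  · simp [add_assoc] at h₁ ⊢; linear_combination h₁
  · simp [add_assoc] at h₂ ⊢; linear_combination h₂

lemma coeff_eta_one_and_xi_two_eq_zero (hT : HasNormalSupport (cmT η α β ξ)) (l : ℕ) :
    coeff (mon2 1 (l + 2)) η = 0 ∧ coeff (mon2 2 (l + 1)) ξ = 0 := by
  have h₁ := hT.coeff_eq_zero (d := mon3 (l + 1) 1 2) (by simp [NonNormal])
  have h₂ := hT.coeff_eq_zero (d := mon3 l 2 3) (by simp [NonNormal])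
  rw [coeff_cmT, coeff_aeval_xu, coeff_aeval_xu] at h₁ h₂
  refine eq_zero_of_choose_pair (n := l + 1) (k := 0) (by omega) ?_ ?_
  · simp [add_assoc] at h₁ ⊢; linear_combination h₁
  · simp [add_assoc] at h₂ ⊢; linear_combination h₂

lemma coeff_eta_eq_zero_of_four_le_add (hT : HasNormalSupport (cmT η α β ξ)) {p l : ℕ}
    (h : 4 ≤ p + l) : coeff (mon2 p l) η = 0 := by
  rcases Nat.lt_or_ge p 2 with hp | hp
  · interval_cases p
    · obtain ⟨m, rfl⟩ : ∃ m, l = m + 3 := ⟨l - 3, by omega⟩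
      exact (coeff_eta_zero_and_xi_one_eq_zero hT m).1
    · obtain ⟨m, rfl⟩ : ∃ m, l = m + 2 := ⟨l - 2, by omega⟩
      exact (coeff_eta_one_and_xi_two_eq_zero hT m).1
  · exact coeff_eta_eq_zero_of_two_le hT hp l

lemma coeff_xi_eq_zero_of_three_le_add (hT : HasNormalSupport (cmT η α β ξ)) {p l : ℕ}
    (h : 3 ≤ p + l) : coeff (mon2 p l) ξ = 0 := by
  rcases Nat.lt_or_ge p 3 with hp | hp
  · interval_cases p
    · obtain ⟨m, rfl⟩ : ∃ m, l = m + 2 := ⟨l - 2, by omega⟩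
      exact coeff_xi_zero_eq_zero hT m
    · obtain ⟨m, rfl⟩ : ∃ m, l = m + 2 := ⟨l - 2, by omega⟩
      exact (coeff_eta_zero_and_xi_one_eq_zero hT m).2
    · obtain ⟨m, rfl⟩ : ∃ m, l = m + 1 := ⟨l - 1, by omega⟩
      exact (coeff_eta_one_and_xi_two_eq_zero hT m).2
  · exact coeff_xi_eq_zero_of_three_le hT hp l

theorem cmT_eq_zero_of_hasNormalSupport (hT : HasNormalSupport (cmT η α β ξ)) :
    cmT η α β ξ = 0 := by
  ext d
  obtain ⟨i, j, k, rfl⟩ : ∃ i j k, d = mon3 i j k := ⟨_, _, _, eq_mon3 d⟩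
  rw [coeff_zero]
  by_cases hd : NonNormal (mon3 i j k)
  · exact hT.coeff_eq_zero hd
  simp only [NonNormal, mon3_apply_one, mon3_apply_two] at hd
  have hη : (if j ≤ k then ((i + j).choose j : ℝ) * coeff (mon2 (k - j) (i + j)) η else 0) = 0 := by
    split_ifs
    · rw [coeff_eta_eq_zero_of_four_le_add hT (by omega), mul_zero]
    · rfl
  have hξ : (if j - 1 ≤ k then ((i + (j - 1)).choose (j - 1) : ℝ) *
      coeff (mon2 (k - (j - 1)) (i + (j - 1))) ξ else 0) = 0 := by
    split_ifs
    · rw [coeff_xi_eq_zero_of_three_le_add hT (by omega), mul_zero]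
    · rfl
  rw [coeff_cmT, coeff_aeval_xu, coeff_aeval_xu, hη, hξ]
  simp [show k ≠ 0 by omega, show k ≠ 1 by omega]

end Uniqueness

lemma mem_of_monomial_mem {σ K : Type*} [Field K] {W : Submodule K (MvPolynomial σ K)}
    {P : MvPolynomial σ K} (h : ∀ d ∈ P.support, monomial d 1 ∈ W) : P ∈ W := by
  rw [P.as_sum]
  exact W.sum_mem fun d hd => by simpa [smul_monomial] using W.smul_mem (coeff d P) (h d hd)

lemma monomial_mem_of_coeff_ne_zero {σ K : Type*} [Field K] {W : Submodule K (MvPolynomial σ K)}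
    {g : MvPolynomial σ K} (hg : g ∈ W) {d : σ →₀ ℕ} (hd : coeff d g ≠ 0)
    (h : ∀ d' ∈ g.support, d' ≠ d → monomial d' 1 ∈ W) : monomial d 1 ∈ W := by
  classical
  have hrest : g - monomial d (coeff d g) ∈ W := mem_of_monomial_mem fun d' hd' => by
    rw [mem_support_iff, coeff_sub, coeff_monomial] at hd'
    split_ifs at hd' with hdd
    · simp [hdd] at hd'
    · exact h d' (mem_support_iff.mpr (by simpa using hd')) (Ne.symm hdd)
  have : monomial d (coeff d g) ∈ W := by simpa using W.sub_mem hg hrest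
  simpa [smul_monomial, hd] using W.smul_mem (coeff d g)⁻¹ this

section Existence

noncomputable def cmTLinear :
    (MvPolynomial (Fin 2) ℝ × MvPolynomial (Fin 2) ℝ × MvPolynomial (Fin 2) ℝ ×
      MvPolynomial (Fin 2) ℝ) →ₗ[ℝ] MvPolynomial (Fin 3) ℝ where
  toFun q := cmT q.1 q.2.1 q.2.2.1 q.2.2.2
  map_add' _ _ := by simp only [cmT, Prod.fst_add, Prod.snd_add, map_add]; ring
  map_smul' c _ := by
    simp only [cmT, Prod.smul_fst, Prod.smul_snd, map_smul, RingHom.id_apply, smul_sub,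
      mul_smul_comm]

/-- `cmImage ν` is the paper's `Im T_ν`, and `normalSpan ν` its `N_ν`. -/
noncomputable def cmImage (ν : ℕ) : Submodule ℝ (MvPolynomial (Fin 3) ℝ) :=
  ((weightedHomogeneousSubmodule ℝ wXY ν).prod ((weightedHomogeneousSubmodule ℝ wAB ν).prod
    ((weightedHomogeneousSubmodule ℝ wAB (ν - 1)).prod
      (weightedHomogeneousSubmodule ℝ wXY (ν - 1))))).map cmTLinear

noncomputable def normalSpan (ν : ℕ) : Submodule ℝ (MvPolynomial (Fin 3) ℝ) :=
  weightedHomogeneousSubmodule ℝ wABX ν ⊓ restrictSupport ℝ {d | ¬NonNormal d}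

variable {ν : ℕ}

lemma cmT_mem_cmImage {η α β ξ : MvPolynomial (Fin 2) ℝ} (hη : η.IsWeightedHomogeneous wXY ν)
    (hα : α.IsWeightedHomogeneous wAB ν) (hβ : β.IsWeightedHomogeneous wAB (ν - 1))
    (hξ : ξ.IsWeightedHomogeneous wXY (ν - 1)) : cmT η α β ξ ∈ cmImage ν :=
  ⟨(η, α, β, ξ), ⟨hη, hα, hβ, hξ⟩, rfl⟩

lemma isWeightedHomogeneous_monomial_wXY {p l μ : ℕ} (h : p + 2 * l = μ) (c : ℝ) :
    (monomial (mon2 p l) c).IsWeightedHomogeneous wXY μ :=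
  isWeightedHomogeneous_monomial _ _ _ (by rw [weight_mon2_wXY, h])

lemma isWeightedHomogeneous_monomial_wAB {i j μ : ℕ} (h : 2 * i + j = μ) (c : ℝ) :
    (monomial (mon2 i j) c).IsWeightedHomogeneous wAB μ :=
  isWeightedHomogeneous_monomial _ _ _ (by rw [weight_mon2_wAB, h])

lemma monomial_mem_normalSpan {i j k : ℕ} (hw : 2 * i + j + k = ν)
    (hn : ¬NonNormal (mon3 i j k)) : monomial (mon3 i j k) 1 ∈ normalSpan ν := by
  refine ⟨isWeightedHomogeneous_monomial _ _ _ (by rw [weight_mon3, hw]), ?_⟩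
  rw [SetLike.mem_coe, mem_restrictSupport_iff]
  intro d hd
  rw [Finset.mem_coe, support_monomial, if_neg one_ne_zero, Finset.mem_singleton] at hd
  rwa [hd]

lemma monomial_mem_cmImage_of_le_one {i j k : ℕ} (hk : k ≤ 1) (hw : 2 * i + j + k = ν) :
    monomial (mon3 i j k) 1 ∈ cmImage ν := by
  interval_cases k
  · have h := cmT_mem_cmImage (isWeightedHomogeneous_zero ℝ wXY ν)
      (isWeightedHomogeneous_monomial_wAB (i := i) (j := j) (by omega) 1)
      (isWeightedHomogeneous_zero ℝ wAB _) (isWeightedHomogeneous_zero ℝ wXY _)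
    have e : cmT 0 (monomial (mon2 i j) 1) 0 0 = -monomial (mon3 i j 0) 1 := by
      simp only [cmT, map_zero, aeval_ab_monomial]; ring
    simpa [e] using (cmImage ν).neg_mem h
  · have h := cmT_mem_cmImage (isWeightedHomogeneous_zero ℝ wXY ν)
      (isWeightedHomogeneous_zero ℝ wAB _)
      (isWeightedHomogeneous_monomial_wAB (i := i) (j := j) (by omega) 1)
      (isWeightedHomogeneous_zero ℝ wXY _)
    have e : cmT 0 0 (monomial (mon2 i j) 1) 0 = -monomial (mon3 i j 1) 1 := by
      simp only [cmT, map_zero, aeval_ab_monomial, monomial_mon3]; ring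
    simpa [e] using (cmImage ν).neg_mem h

lemma monomial_mem_of_generator {i j k : ℕ} {η ξ : MvPolynomial (Fin 2) ℝ}
    (hη : η.IsWeightedHomogeneous wXY ν) (hξ : ξ.IsWeightedHomogeneous wXY (ν - 1))
    (hd : coeff (mon3 i j k) (cmT η 0 0 ξ) ≠ 0)
    (hrest : ∀ i' j' k', coeff (mon3 i' j' k') (cmT η 0 0 ξ) ≠ 0 →
      ¬(i' = i ∧ j' = j ∧ k' = k) → 2 * i' + j' + k' = ν ∧ (k' ≤ 1 ∨ j < j'))
    (ih : ∀ i' j' k', 2 * i' + j' + k' = ν → j < j' →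
      monomial (mon3 i' j' k') 1 ∈ cmImage ν ⊔ normalSpan ν) :
    monomial (mon3 i j k) 1 ∈ cmImage ν ⊔ normalSpan ν := by
  have hg := cmT_mem_cmImage hη (isWeightedHomogeneous_zero ℝ wAB _)
    (isWeightedHomogeneous_zero ℝ wAB _) hξ
  refine monomial_mem_of_coeff_ne_zero (Submodule.mem_sup_left hg) hd fun d hd hne => ?_
  obtain ⟨i', j', k', rfl⟩ : ∃ i' j' k', d = mon3 i' j' k' := ⟨_, _, _, eq_mon3 d⟩
  obtain ⟨hw, hk | hj⟩ := hrest i' j' k' (mem_support_iff.mp hd) (by rwa [Ne, mon3_inj] at hne)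
  · exact Submodule.mem_sup_left (monomial_mem_cmImage_of_le_one hk hw)
  · exact ih i' j' k' hw hj

lemma monomial_b0_mem {i k : ℕ} (hw : 2 * i + k = ν)
    (ih : ∀ i' j' k', 2 * i' + j' + k' = ν → 0 < j' →
      monomial (mon3 i' j' k') 1 ∈ cmImage ν ⊔ normalSpan ν) :
    monomial (mon3 i 0 k) 1 ∈ cmImage ν ⊔ normalSpan ν := by
  refine monomial_mem_of_generator (η := monomial (mon2 k i) 1) (ξ := 0)
    (isWeightedHomogeneous_monomial_wXY (by omega) 1) (isWeightedHomogeneous_zero ℝ wXY _)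
    ?_ (fun i' j' k' hc hne => ?_) ih
  all_goals simp only [coeff_cmT, coeff_aeval_xu_monomial, map_zero, coeff_zero] at *
  · simp
  · simp at hc; omega

lemma monomial_b1_mem {i k : ℕ} (hw : 2 * i + 1 + k = ν)
    (ih : ∀ i' j' k', 2 * i' + j' + k' = ν → 1 < j' →
      monomial (mon3 i' j' k') 1 ∈ cmImage ν ⊔ normalSpan ν) :
    monomial (mon3 i 1 k) 1 ∈ cmImage ν ⊔ normalSpan ν := by
  refine monomial_mem_of_generator (η := 0) (ξ := monomial (mon2 k i) 1)
    (isWeightedHomogeneous_zero ℝ wXY _) (isWeightedHomogeneous_monomial_wXY (by omega) 1)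
    ?_ (fun i' j' k' hc hne => ?_) ih
  all_goals simp only [coeff_cmT, coeff_aeval_xu_monomial, map_zero, coeff_zero] at *
  · simp
  · simp at hc; omega

lemma monomial_b2x2_mem {i : ℕ} (hw : 2 * i + 4 = ν)
    (ih : ∀ i' j' k', 2 * i' + j' + k' = ν → 2 < j' →
      monomial (mon3 i' j' k') 1 ∈ cmImage ν ⊔ normalSpan ν) :
    monomial (mon3 i 2 2) 1 ∈ cmImage ν ⊔ normalSpan ν := by
  refine monomial_mem_of_generator (η := monomial (mon2 0 (i + 2)) 1) (ξ := 0)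
    (isWeightedHomogeneous_monomial_wXY (by omega) 1) (isWeightedHomogeneous_zero ℝ wXY _)
    ?_ (fun i' j' k' hc hne => ?_) ih
  all_goals simp only [coeff_cmT, coeff_aeval_xu_monomial, map_zero, coeff_zero] at *
  · simp [Nat.choose_eq_zero_iff]
  · simp at hc; omega

lemma monomial_b3x2_mem {i : ℕ} (hw : 2 * i + 5 = ν)
    (ih : ∀ i' j' k', 2 * i' + j' + k' = ν → 3 < j' →
      monomial (mon3 i' j' k') 1 ∈ cmImage ν ⊔ normalSpan ν) :
    monomial (mon3 i 3 2) 1 ∈ cmImage ν ⊔ normalSpan ν := by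
  refine monomial_mem_of_generator (η := 0) (ξ := monomial (mon2 0 (i + 2)) 1)
    (isWeightedHomogeneous_zero ℝ wXY _) (isWeightedHomogeneous_monomial_wXY (by omega) 1)
    ?_ (fun i' j' k' hc hne => ?_) ih
  all_goals simp only [coeff_cmT, coeff_aeval_xu_monomial, map_zero, coeff_zero] at *
  · simp [Nat.choose_eq_zero_iff]
  · simp at hc; omega

/-- The generator is `x u^(i+2) - (i+2) b x^2 u^(i+1)` with `u = a + b x`: its `a^(i+1) b x^2`
terms cancel. -/
lemma monomial_b2x3_mem {i : ℕ} (hw : 2 * i + 5 = ν)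
    (ih : ∀ i' j' k', 2 * i' + j' + k' = ν → 2 < j' →
      monomial (mon3 i' j' k') 1 ∈ cmImage ν ⊔ normalSpan ν) :
    monomial (mon3 i 2 3) 1 ∈ cmImage ν ⊔ normalSpan ν := by
  refine monomial_mem_of_generator (η := monomial (mon2 1 (i + 2)) 1)
    (ξ := monomial (mon2 2 (i + 1)) ((i : ℝ) + 2))
    (isWeightedHomogeneous_monomial_wXY (by omega) _)
    (isWeightedHomogeneous_monomial_wXY (by omega) _) ?_ (fun i' j' k' hc hne => ?_) ih
  all_goals simp only [coeff_cmT, coeff_aeval_xu_monomial] at *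
  · intro h
    exact one_ne_zero (eq_zero_of_choose_pair (n := i + 1) (k := 0) (A := 1) (B := (i : ℝ) + 2)
      (by omega) (by simp [add_assoc]) (by simp [add_assoc] at h ⊢; linear_combination h)).1
  · by_contra hgoal
    split_ifs at hc <;> (try simp at hc) <;> (try omega)
    obtain rfl : j' = 1 := by omega
    simp at hc

/-- The generator is `(i+2) u^(i+3) - C(i+3,2) b x u^(i+2)` with `u = a + b x`: its
`a^(i+1) b^2 x^2` terms cancel. -/
lemma monomial_b3x3_mem {i : ℕ} (hw : 2 * i + 6 = ν)
    (ih : ∀ i' j' k', 2 * i' + j' + k' = ν → 3 < j' →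
      monomial (mon3 i' j' k') 1 ∈ cmImage ν ⊔ normalSpan ν) :
    monomial (mon3 i 3 3) 1 ∈ cmImage ν ⊔ normalSpan ν := by
  refine monomial_mem_of_generator (η := monomial (mon2 0 (i + 3)) ((i : ℝ) + 2))
    (ξ := monomial (mon2 1 (i + 2)) ((i + 3).choose 2))
    (isWeightedHomogeneous_monomial_wXY (by omega) _)
    (isWeightedHomogeneous_monomial_wXY (by omega) _) ?_ (fun i' j' k' hc hne => ?_) ih
  all_goals simp only [coeff_cmT, coeff_aeval_xu_monomial] at *
  · intro h
    have hA := (eq_zero_of_choose_pair (n := i + 2) (k := 1) (A := (i : ℝ) + 2)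
      (B := (i + 3).choose 2) (by omega) (by simp [add_assoc]; ring)
      (by simp [add_assoc] at h ⊢; linear_combination h)).1
    exact absurd hA (by positivity)
  · by_contra hgoal
    split_ifs at hc <;> (try simp at hc) <;> (try omega)
    obtain rfl : j' = 2 := by omega
    exact hc (by simp; ring)

theorem monomial_mem_cmImage_sup_normalSpan (i j k : ℕ) (hw : 2 * i + j + k = ν) :
    monomial (mon3 i j k) 1 ∈ cmImage ν ⊔ normalSpan ν := by
  induction hn : ν - j using Nat.strong_induction_on generalizing i j k with
  | _ n ih =>
  replace ih : ∀ i' j' k', 2 * i' + j' + k' = ν → j < j' →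
      monomial (mon3 i' j' k') 1 ∈ cmImage ν ⊔ normalSpan ν :=
    fun i' j' k' hw' hj => ih (ν - j') (by omega) i' j' k' hw' rfl
  by_cases hk : k ≤ 1
  · exact Submodule.mem_sup_left (monomial_mem_cmImage_of_le_one hk hw)
  by_cases hnn : NonNormal (mon3 i j k)
  swap
  · exact Submodule.mem_sup_right (monomial_mem_normalSpan hw hnn)
  simp only [NonNormal, mon3_apply_one, mon3_apply_two] at hnn
  rcases hnn with rfl | hk0 | rfl | hk1 | ⟨rfl | rfl, rfl | rfl⟩
  · exact monomial_b0_mem (by omega) ih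
  · omega
  · exact monomial_b1_mem hw ih
  · omega
  · exact monomial_b2x2_mem (by omega) ih
  · exact monomial_b2x3_mem (by omega) ih
  · exact monomial_b3x2_mem (by omega) ih
  · exact monomial_b3x3_mem (by omega) ih

lemma mem_cmImage_sup_normalSpan {P : MvPolynomial (Fin 3) ℝ}
    (hP : P.IsWeightedHomogeneous wABX ν) : P ∈ cmImage ν ⊔ normalSpan ν := by
  refine mem_of_monomial_mem fun d hd => ?_
  obtain ⟨i, j, k, rfl⟩ : ∃ i j k, d = mon3 i j k := ⟨_, _, _, eq_mon3 d⟩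
  exact monomial_mem_cmImage_sup_normalSpan i j k
    (by rw [← weight_mon3]; exact hP (mem_support_iff.mp hd))

end Existence

theorem stmt0 (ν : ℕ) :
    (∀ P : MvPolynomial (Fin 3) ℝ, P.IsWeightedHomogeneous wABX ν →
      ∃ (η α β ξ : MvPolynomial (Fin 2) ℝ) (N : MvPolynomial (Fin 3) ℝ),
        η.IsWeightedHomogeneous wXY ν ∧ α.IsWeightedHomogeneous wAB ν ∧
        β.IsWeightedHomogeneous wAB (ν - 1) ∧ ξ.IsWeightedHomogeneous wXY (ν - 1) ∧
        N.IsWeightedHomogeneous wABX ν ∧ (∀ d ∈ N.support, ¬ NonNormal d) ∧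
        P = cmT η α β ξ + N) ∧
    (∀ η α β ξ : MvPolynomial (Fin 2) ℝ,
      η.IsWeightedHomogeneous wXY ν → α.IsWeightedHomogeneous wAB ν →
      β.IsWeightedHomogeneous wAB (ν - 1) → ξ.IsWeightedHomogeneous wXY (ν - 1) →
      (cmT η α β ξ).IsWeightedHomogeneous wABX ν →
      (∀ d ∈ (cmT η α β ξ).support, ¬ NonNormal d) →
      cmT η α β ξ = 0) := by
  refine ⟨fun P hP => ?_, fun η α β ξ _ _ _ _ _ hT => cmT_eq_zero_of_hasNormalSupport hT⟩
  obtain ⟨T, ⟨⟨η, α, β, ξ⟩, ⟨hη, hα, hβ, hξ⟩, rfl⟩, N, ⟨hN, hNs⟩, rfl⟩ :=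
    Submodule.mem_sup.mp (mem_cmImage_sup_normalSpan hP)
  exact ⟨η, α, β, ξ, N, hη, hα, hβ, hξ, hN, (mem_restrictSupport_iff ℝ).mp hNs, rfl⟩
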